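/- Let g and g₀ be positive definite Hermitian n×n matrices and ξ ∈ ℂⁿ. Then |ξ|²_{g₀} ≤ |ξ|²_g · (tr_g g₀)^(n-1) · (det g / det g₀), where tr_g g₀ = tr(g⁻¹ g₀) and |ξ|²_g = ξ* g⁻¹ ξ. -/

import Mathlib

open Matrix
open scoped ComplexOrder

/-!
Write `g = Bᴴ B` with `B` invertible and `A = B⁻ᴴ g₀ B⁻¹`. Conjugating by `B` leaves every
quantity in the inequality unchanged and turns `g` into `1`, `g₀` into `A` and `ξ` into
`η = B⁻ᴴ ξ`; it remains to show `η* A⁻¹ η ≤ |η|² (tr A)ⁿ⁻¹ / det A`. In an eigenbasis of `A`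
the left side is `∑ λᵢ⁻¹ |ηᵢ|²`, and each `λᵢ⁻¹ = ∏_{j ≠ i} λⱼ / det A` is at most
`(∑ⱼ λⱼ)ⁿ⁻¹ / det A`.
-/

theorem inv_le_sum_pow_div_prod {ι K : Type*} [Fintype ι] [Field K] [LinearOrder K]
    [IsStrictOrderedRing K] {f : ι → K} (hf : ∀ i, 0 < f i) (i : ι) :
    (f i)⁻¹ ≤ (∑ j, f j) ^ (Fintype.card ι - 1) / ∏ j, f j := by
  classical
  rw [le_div_iff₀ (Finset.prod_pos fun j _ => hf j),
    ← Finset.mul_prod_erase _ _ (Finset.mem_univ i), inv_mul_cancel_left₀ (hf i).ne',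
    ← Finset.card_univ, ← Finset.card_erase_of_mem (Finset.mem_univ i), ← Finset.prod_const]
  exact Finset.prod_le_prod (fun j _ => (hf j).le) fun j _ =>
    Finset.single_le_sum (fun k _ => (hf k).le) (Finset.mem_univ j)

namespace Matrix

theorem dotProduct_mul_mul_conjTranspose_mulVec {m n R : Type*} [Fintype m] [Fintype n]
    [CommSemiring R] [StarRing R] (U : Matrix m n R) (M : Matrix n n R) (x : m → R) :
    star x ⬝ᵥ (U * M * Uᴴ) *ᵥ x = star (Uᴴ *ᵥ x) ⬝ᵥ M *ᵥ (Uᴴ *ᵥ x) := by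
  rw [← mulVec_mulVec, ← mulVec_mulVec, dotProduct_mulVec, star_mulVec,
    conjTranspose_conjTranspose]

section RCLike

variable {n 𝕜 : Type*} [Fintype n] [DecidableEq n] [RCLike 𝕜]

theorem re_dotProduct_diagonal_mulVec (d : n → ℝ) (y : n → 𝕜) :
    RCLike.re (star y ⬝ᵥ diagonal (RCLike.ofReal ∘ d) *ᵥ y) = ∑ i, d i * ‖y i‖ ^ 2 := by
  simp only [mulVec_diagonal, dotProduct, map_sum, Function.comp_apply, Pi.star_apply]
  refine Finset.sum_congr rfl fun i _ => ?_
  rw [mul_left_comm, RCLike.star_def, RCLike.conj_mul, ← RCLike.ofReal_pow,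
    ← RCLike.ofReal_mul, RCLike.ofReal_re]

theorem dotProduct_inv_conjTranspose_mul_mul_mulVec (B M : Matrix n n 𝕜) (x : n → 𝕜) :
    star x ⬝ᵥ (Bᴴ * M * B)⁻¹ *ᵥ x = star (B⁻¹ᴴ *ᵥ x) ⬝ᵥ M⁻¹ *ᵥ (B⁻¹ᴴ *ᵥ x) := by
  rw [mul_inv_rev, mul_inv_rev, ← conjTranspose_nonsing_inv, ← mul_assoc,
    dotProduct_mul_mul_conjTranspose_mulVec]

theorem inv_mul_mul_star_of_mem_unitaryGroup {U : Matrix n n 𝕜} (hU : U ∈ unitaryGroup n 𝕜)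
    (M : Matrix n n 𝕜) : (U * M * star U)⁻¹ = U * M⁻¹ * star U := by
  rw [mul_inv_rev, mul_inv_rev, inv_eq_left_inv (Unitary.star_mul_self_of_mem hU),
    inv_eq_left_inv (Unitary.mul_star_self_of_mem hU), ← mul_assoc]

namespace IsHermitian

variable {A : Matrix n n 𝕜}

theorem inv_eq_eigenvectorUnitary_mul_diagonal (hA : A.IsHermitian)
    (h0 : ∀ i, hA.eigenvalues i ≠ 0) :
    A⁻¹ = (hA.eigenvectorUnitary : Matrix n n 𝕜) *
      diagonal (RCLike.ofReal ∘ (hA.eigenvalues)⁻¹) *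
      star (hA.eigenvectorUnitary : Matrix n n 𝕜) := by
  have hdiag : (diagonal (RCLike.ofReal ∘ hA.eigenvalues : n → 𝕜))⁻¹ =
      diagonal (RCLike.ofReal ∘ (hA.eigenvalues)⁻¹) := by
    refine inv_eq_right_inv ?_
    rw [diagonal_mul_diagonal, ← diagonal_one]
    congr 1
    ext i
    simp [h0 i]
  calc A⁻¹ = _ := congrArg Inv.inv hA.spectral_theorem
    _ = _ := by
      rw [Unitary.conjStarAlgAut_apply,
        inv_mul_mul_star_of_mem_unitaryGroup hA.eigenvectorUnitary.2, hdiag]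

theorem re_dotProduct_inv_mulVec_le (hA : A.IsHermitian) (h0 : ∀ i, hA.eigenvalues i ≠ 0)
    {c : ℝ} (hc : ∀ i, (hA.eigenvalues i)⁻¹ ≤ c) (x : n → 𝕜) :
    RCLike.re (star x ⬝ᵥ A⁻¹ *ᵥ x) ≤ c * RCLike.re (star x ⬝ᵥ x) := by
  set U : Matrix n n 𝕜 := ↑hA.eigenvectorUnitary
  have hx : star x ⬝ᵥ x = star x ⬝ᵥ (U * diagonal (RCLike.ofReal ∘ fun _ => 1) * Uᴴ) *ᵥ x := by
    simp only [Function.comp_def, RCLike.ofReal_one, diagonal_one, mul_one, U,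
      ← star_eq_conjTranspose, Unitary.mul_star_self_of_mem hA.eigenvectorUnitary.2, one_mulVec]
  rw [hA.inv_eq_eigenvectorUnitary_mul_diagonal h0, hx, star_eq_conjTranspose,
    dotProduct_mul_mul_conjTranspose_mulVec, dotProduct_mul_mul_conjTranspose_mulVec,
    re_dotProduct_diagonal_mulVec, re_dotProduct_diagonal_mulVec, Finset.mul_sum]
  exact Finset.sum_le_sum fun i _ => by
    simpa using mul_le_mul_of_nonneg_right (hc i) (by positivity)

end IsHermitian

theorem PosDef.re_dotProduct_inv_mulVec_le_trace_pow_div_det {A : Matrix n n 𝕜}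
    (hA : A.PosDef) (x : n → 𝕜) :
    RCLike.re (star x ⬝ᵥ A⁻¹ *ᵥ x) ≤
      RCLike.re (star x ⬝ᵥ x) * RCLike.re A.trace ^ (Fintype.card n - 1) / RCLike.re A.det := by
  have htrace : RCLike.re A.trace = ∑ i, hA.1.eigenvalues i := by
    simp [hA.1.trace_eq_sum_eigenvalues]
  have hdet : RCLike.re A.det = ∏ i, hA.1.eigenvalues i := by
    rw [hA.1.det_eq_prod_eigenvalues, ← RCLike.ofReal_prod, RCLike.ofReal_re]
  rw [htrace, hdet, mul_div_assoc, mul_comm]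
  exact hA.1.re_dotProduct_inv_mulVec_le (fun i => (hA.eigenvalues_pos i).ne')
    (inv_le_sum_pow_div_prod hA.eigenvalues_pos) x

end RCLike

end Matrix

/-- Pointwise inequality `|ξ|²_{g₀} ≤ |ξ|²_g · (tr_g g₀)^(n-1) · (det g / det g₀)`
for positive definite Hermitian matrices `g, g₀` and a covector `ξ`, where
`|ξ|²_g = ξ* g⁻¹ ξ` and `tr_g g₀ = tr(g⁻¹ g₀)`. -/
theorem stmt_5 (n : ℕ) (g g₀ : Matrix (Fin n) (Fin n) ℂ)
    (hg : g.PosDef) (hg₀ : g₀.PosDef) (ξ : Fin n → ℂ) :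
    (star ξ ⬝ᵥ (g₀⁻¹ *ᵥ ξ)).re ≤
      (star ξ ⬝ᵥ (g⁻¹ *ᵥ ξ)).re * ((g⁻¹ * g₀).trace).re ^ (n - 1) *
        (g.det.re / g₀.det.re) := by
  obtain ⟨B, hB, rfl⟩ : ∃ B, IsUnit B ∧ g = Bᴴ * B := by
    open scoped MatrixOrder in
    exact CStarAlgebra.isStrictlyPositive_iff_eq_star_mul_self.mp hg.isStrictlyPositive
  have hBdet : IsUnit B.det := (isUnit_iff_isUnit_det B).mp hB
  obtain ⟨A, hA, rfl⟩ : ∃ A, A.PosDef ∧ g₀ = Bᴴ * A * B := by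
    refine ⟨B⁻¹ᴴ * g₀ * B⁻¹, hg₀.conjTranspose_mul_mul_same
      (mulVec_injective_of_isUnit (isUnit_nonsing_inv_iff.mpr hB)), ?_⟩
    rw [← mul_assoc, ← mul_assoc, ← conjTranspose_mul, nonsing_inv_mul _ hBdet,
      conjTranspose_one, one_mul, mul_assoc, nonsing_inv_mul _ hBdet, mul_one]
  have hform := dotProduct_inv_conjTranspose_mul_mul_mulVec B 1 ξ
  rw [mul_one, inv_one, one_mulVec] at hform
  have htrace : ((Bᴴ * B)⁻¹ * (Bᴴ * A * B)).trace = A.trace := by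
    rw [Matrix.mul_inv_rev, mul_assoc, ← mul_assoc Bᴴ⁻¹, ← mul_assoc Bᴴ⁻¹,
      nonsing_inv_mul _ (by rwa [det_conjTranspose, isUnit_star]), one_mul, trace_mul_comm,
      mul_assoc, mul_nonsing_inv _ hBdet, mul_one]
  obtain ⟨hdet_pos, hdet_im⟩ := Complex.pos_iff.mp hg.det_pos
  have hdet : (Bᴴ * A * B).det.re = A.det.re * (Bᴴ * B).det.re := by
    rw [show (Bᴴ * A * B).det = A.det * (Bᴴ * B).det by simp only [det_mul]; ring,
      Complex.mul_re, ← hdet_im, mul_zero, sub_zero]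
  rw [dotProduct_inv_conjTranspose_mul_mul_mulVec, hform, htrace, hdet,
    div_mul_cancel_right₀ hdet_pos.ne', ← div_eq_mul_inv]
  simpa using hA.re_dotProduct_inv_mulVec_le_trace_pow_div_det (B⁻¹ᴴ *ᵥ ξ)
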